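/- arXiv:2510.27068 — 5 statements merged into one kernel-verified Lean document; each statement's English description precedes it below -/
import Mathlib

section
/- Let H be a complex Hilbert space and let (P,Q) be a quasi-projection pair on H (P a projection, Q an idempotent, Q* = (2P−1)Q(2P−1)). Then the following are equivalent: (i) Q = Q*; (ii) PQ(1−P) = 0; (iii) (1−P)QP = 0. -/
noncomputable section

variable {H : Type*} [NormedAddCommGroup H] [InnerProductSpace ℂ H] [CompleteSpace H]

/-- For a quasi-projection pair `(P, Q)` on a complex Hilbert space (`P` a projection, `Q` an
idempotent, `Q* = (2P - 1) Q (2P - 1)`), the following are equivalent: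
(i) `Q = Q*`; (ii) `P Q (1 - P) = 0`; (iii) `(1 - P) Q P = 0`. -/
theorem quasiProjectionPair_selfAdjoint_tfae (P Q : H →L[ℂ] H)
    (hPsa : IsSelfAdjoint P) (hPidem : IsIdempotentElem P) (hQidem : IsIdempotentElem Q)
    (hqpp : star Q = (2 * P - 1) * Q * (2 * P - 1)) :
    List.TFAE [Q = star Q, P * Q * (1 - P) = 0, (1 - P) * Q * P = 0] := by
  have hP2 : P * P = P := hPidem
  have key : Q - star Q = 2 * (P * Q * (1 - P)) + 2 * ((1 - P) * Q * P) := by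
    rw [hqpp]; noncomm_ring
  have h1 : (1 - P) * (2 * P - 1) = -(1 - P) := by
    have : (1 - P) * (2 * P - 1) = 2 * P - 1 - 2 * (P * P) + P := by noncomm_ring
    rw [this, hP2]; noncomm_ring
  have h2 : (2 * P - 1) * P = P := by
    have : (2 * P - 1) * P = 2 * (P * P) - P := by noncomm_ring
    rw [this, hP2]; noncomm_ring
  have hstar : star (P * Q * (1 - P)) = -((1 - P) * Q * P) := by
    rw [star_mul, star_mul, star_sub, star_one, hPsa.star_eq, hqpp]
    calc (1 - P) * ((2 * P - 1) * Q * (2 * P - 1)) * P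
        = ((1 - P) * (2 * P - 1)) * Q * ((2 * P - 1) * P) := by noncomm_ring
      _ = -((1 - P) * Q * P) := by rw [h1, h2]; noncomm_ring
  tfae_have 1 → 2
  · intro h
    have h0 : 2 * (P * Q * (1 - P)) + 2 * ((1 - P) * Q * P) = 0 := by
      rw [← key, ← h]; exact sub_self Q
    have := congrArg (fun X => P * X) h0
    simp only [mul_add] at this
    have e1 : P * (2 * (P * Q * (1 - P))) = 2 * (P * Q * (1 - P)) := by
      have : P * (2 * (P * Q * (1 - P))) = 2 * ((P * P) * Q * (1 - P)) := by noncomm_ring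
      rw [this, hP2]
    have e2 : P * (2 * ((1 - P) * Q * P)) = 0 := by
      have : P * (2 * ((1 - P) * Q * P)) = 2 * ((P - P * P) * Q * P) := by noncomm_ring
      rw [this, hP2]; simp
    rw [e1, e2, add_zero, mul_zero] at this
    have h4 : (2 : ℂ) • (P * Q * (1 - P)) = 0 := by
      rw [two_smul, ← two_mul]; exact this
    rcases smul_eq_zero.mp h4 with h' | h'
    · norm_num at h'
    · exact h'
  tfae_have 2 ↔ 3
  · constructor
    · intro h
      have := congrArg star h
      rw [hstar, star_zero, neg_eq_zero] at this
      exact this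
    · intro h
      have : star (P * Q * (1 - P)) = 0 := by rw [hstar, h, neg_zero]
      simpa using congrArg star this
  tfae_have 2 → 1
  · intro h
    have h3 : (1 - P) * Q * P = 0 := tfae_2_iff_3.mp h
    have : Q - star Q = 0 := by rw [key, h, h3]; simp
    exact sub_eq_zero.mp this
  tfae_finish

end
end

section
/- Let H₁ and H₂ be complex Hilbert spaces. Let A ∈ B(H₁) be self-adjoint with A² − A ≥ 0, let U ∈ B(H₁,H₂) be such that U*U equals the orthogonal projection onto the closure of ran(A² − A), and let Q₀ ∈ B(H₂) be a projection with U*Q₀ = 0. Set Q₂₂ = U(1 − A)U* + Q₀ ∈ B(H₂). Then the following are equivalent: (i) ker A = ker(1 − A) = {0} and ker U* = {0}; (ii) ker(A² − A) = {0} and ker U* = {0}; (iii) U is unitary, i.e. U*U = 1 and UU* = 1; (iv) ker A = ker(1 − A) = {0} and ker Q₂₂ = ker(1 − Q₂₂) = {0}. -/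
/- For an idempotent `Q` on a complex Hilbert space `H`, we define (in `B(H)`):
the orthogonal projection onto the closure of the range of an operator,
the range projection `P_{ran Q} = Q (Q + Q* - 1)⁻¹`,
`|Q*| = (Q Q*)^{1/2}`, its Moore-Penrose inverse
`|Q*|^† = (P_{ran Q} P_{ran Q*} P_{ran Q})^{1/2}`,
the matched projection `m(Q) = (1/2)(|Q*| + Q*) |Q*|^† (|Q*| + 1)⁻¹ (|Q*| + Q)`,
and the supplementary projection `s(Q) = m(2 P_{ran Q} - Q)`. -/

noncomputable section

namespace QPP

variable {H : Type*} [NormedAddCommGroup H] [InnerProductSpace ℂ H] [CompleteSpace H]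

/-- The orthogonal projection onto the closure of the range of `T`, as an element of `B(H)`. -/
def closRangeProj (T : H →L[ℂ] H) : H →L[ℂ] H :=
  letI K := (LinearMap.range (T : H →ₗ[ℂ] H)).topologicalClosure
  haveI : CompleteSpace K := (LinearMap.range (T : H →ₗ[ℂ] H)).isClosed_topologicalClosure.completeSpace_coe
  K.subtypeL ∘L K.orthogonalProjectionOnto

/-- The range projection `P_{ran Q} = Q (Q + Q* - 1)⁻¹` of an idempotent `Q`.  (For an
idempotent `Q` the operator `Q + Q* - 1` is invertible, so `Ring.inverse` is its inverse.) -/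
def rangeProj (Q : H →L[ℂ] H) : H →L[ℂ] H :=
  Q * Ring.inverse (Q + star Q - 1)

/-- `|Q*| = (Q Q*)^{1/2}`. -/
def absStar (Q : H →L[ℂ] H) : H →L[ℂ] H :=
  CFC.sqrt (Q * star Q)

/-- `|Q*|^† = (P_{ran Q} P_{ran Q*} P_{ran Q})^{1/2}`, the Moore-Penrose inverse of `|Q*|`. -/
def absStarPinv (Q : H →L[ℂ] H) : H →L[ℂ] H :=
  CFC.sqrt (rangeProj Q * rangeProj (star Q) * rangeProj Q)

/-- The matched projection `m(Q) = (1/2)(|Q*| + Q*) |Q*|^† (|Q*| + 1)⁻¹ (|Q*| + Q)`. -/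
def matchedProj (Q : H →L[ℂ] H) : H →L[ℂ] H :=
  (2 : ℂ)⁻¹ • ((absStar Q + star Q) * absStarPinv Q * Ring.inverse (absStar Q + 1)
      * (absStar Q + Q))

/-- The supplementary projection `s(Q) = m(2 P_{ran Q} - Q)`. -/
def suppProj (Q : H →L[ℂ] H) : H →L[ℂ] H :=
  matchedProj (2 * rangeProj Q - Q)

end QPP

variable {H : Type*} [NormedAddCommGroup H] [InnerProductSpace ℂ H] [CompleteSpace H]

variable {H₁ H₂ : Type*} [NormedAddCommGroup H₁] [InnerProductSpace ℂ H₁] [CompleteSpace H₁]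
  [NormedAddCommGroup H₂] [InnerProductSpace ℂ H₂] [CompleteSpace H₂]

/-! Since `A² - A` is self-adjoint, the closure of its range is the orthogonal complement of its
kernel, so `U* U = 1` says exactly that `A² - A = -A (1 - A)` is injective; an isometry whose
adjoint is injective is unitary. For unitary `U`, `U* Q₀ = 0` forces `Q₀ = 0`, and `Q₂₂`,
`1 - Q₂₂` are the unitary conjugates of `1 - A`, `A`. Conversely, if `U* x = 0`, then `Q₀ x`
is a fixed point of `Q₂₂`, hence `0`, and then `Q₂₂ x = Q₀ x = 0`. -/

section Injectivity

variable {𝕜 E F : Type*} [NontriviallyNormedField 𝕜]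
  [NormedAddCommGroup E] [NormedSpace 𝕜 E] [NormedAddCommGroup F] [NormedSpace 𝕜 F]

theorem Commute.injective_mul_iff {f g : E →L[𝕜] E} (h : Commute f g) :
    Function.Injective ⇑(f * g) ↔ Function.Injective f ∧ Function.Injective g := by
  rw [FunLike.coe_mul_eq_comp]
  refine ⟨fun hfg => ⟨?_, hfg.of_comp⟩, fun ⟨hf, hg⟩ => hf.comp hg⟩
  rw [← FunLike.coe_mul_eq_comp, h.eq, FunLike.coe_mul_eq_comp] at hfg
  exact hfg.of_comp

theorem ContinuousLinearMap.injective_mul_self_sub_iff (A : E →L[𝕜] E) :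
    Function.Injective ⇑(A * A - A) ↔
      Function.Injective A ∧ Function.Injective ⇑(1 - A) := by
  have hA : A * A - A = -(A * (1 - A)) := by noncomm_ring
  rw [hA, FunLike.coe_neg]
  change Function.Injective (Neg.neg ∘ _) ↔ _
  rw [neg_injective.of_comp_iff,
    ((Commute.one_right A).sub_right (Commute.refl A)).injective_mul_iff]

theorem ContinuousLinearMap.injective_comp_comp {W : E →L[𝕜] F} {V : F →L[𝕜] E}
    (hVW : V ∘L W = 1) (hWV : W ∘L V = 1) {B : E →L[𝕜] E} (hB : Function.Injective B) :
    Function.Injective (W ∘L B ∘L V) :=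
  have hW : Function.Injective W := Function.LeftInverse.injective fun x => congr($hVW x)
  have hV : Function.Injective V := Function.LeftInverse.injective fun x => congr($hWV x)
  hW.comp (hB.comp hV)

theorem ContinuousLinearMap.one_sub_comp_one_sub_comp {W : E →L[𝕜] F} {V : F →L[𝕜] E}
    (hWV : W ∘L V = 1) (B : E →L[𝕜] E) : 1 - W ∘L (1 - B) ∘L V = W ∘L B ∘L V := by
  rw [sub_comp]
  change 1 - W ∘L (V - B ∘L V) = _
  rw [comp_sub, hWV, sub_sub_cancel]

theorem ContinuousLinearMap.injective_of_injective_add_of_injective_one_sub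
    {W : E →L[𝕜] F} {B : E →L[𝕜] E} {V : F →L[𝕜] E} {Q₀ : F →L[𝕜] F}
    (hQ₀ : IsIdempotentElem Q₀) (hVQ₀ : V ∘L Q₀ = 0)
    (hQ : Function.Injective ⇑(W ∘L B ∘L V + Q₀))
    (hQ' : Function.Injective ⇑(1 - (W ∘L B ∘L V + Q₀))) : Function.Injective V := by
  rw [injective_iff_map_eq_zero] at hQ hQ' ⊢
  intro x hx
  have hQ₀x : Q₀ x = 0 := by
    have hVQ₀x : V (Q₀ x) = 0 := congr($hVQ₀ x)
    have hQ₀Q₀x : Q₀ (Q₀ x) = Q₀ x := congr($hQ₀.eq x)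
    exact hQ' _ (by simp [hVQ₀x, hQ₀Q₀x])
  exact hQ x (by simp [hx, hQ₀x])

end Injectivity

section Hilbert

variable {E F : Type*} [NormedAddCommGroup E] [InnerProductSpace ℂ E] [CompleteSpace E]
  [NormedAddCommGroup F] [InnerProductSpace ℂ F] [CompleteSpace F]

theorem QPP.closRangeProj_eq_one_iff (T : E →L[ℂ] E) :
    QPP.closRangeProj T = 1 ↔ Function.Injective (ContinuousLinearMap.adjoint T) := by
  change (LinearMap.range (T : E →ₗ[ℂ] E)).topologicalClosure.starProjection = 1 ↔ _
  rw [← Submodule.starProjection_top', Submodule.starProjection_inj,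
    Submodule.topologicalClosure_eq_top_iff, ContinuousLinearMap.orthogonal_range,
    LinearMap.ker_eq_bot, ContinuousLinearMap.coe_coe]

theorem ContinuousLinearMap.comp_adjoint_eq_one_iff {U : E →L[ℂ] F}
    (hU : adjoint U ∘L U = 1) :
    U ∘L adjoint U = 1 ↔ Function.Injective (adjoint U) := by
  refine ⟨fun h => Function.LeftInverse.injective fun x => congr($h x), fun h => ?_⟩
  ext x
  exact h congr($hU (adjoint U x))

end Hilbert

open ContinuousLinearMap in
theorem canonicalRep_unitary_tfae_general (A : H₁ →L[ℂ] H₁) (U : H₁ →L[ℂ] H₂) (Q₀ : H₂ →L[ℂ] H₂)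
    (hAsa : IsSelfAdjoint A)
    (hU : adjoint U ∘L U = QPP.closRangeProj (A * A - A))
    (hQ₀idem : IsIdempotentElem Q₀)
    (hUQ₀ : adjoint U ∘L Q₀ = 0) :
    List.TFAE
      [LinearMap.ker (A : H₁ →ₗ[ℂ] H₁) = ⊥ ∧ LinearMap.ker ((1 - A : H₁ →L[ℂ] H₁) : H₁ →ₗ[ℂ] H₁) = ⊥ ∧ LinearMap.ker (adjoint U : H₂ →ₗ[ℂ] H₁) = ⊥,
       LinearMap.ker ((A * A - A : H₁ →L[ℂ] H₁) : H₁ →ₗ[ℂ] H₁) = ⊥ ∧ LinearMap.ker (adjoint U : H₂ →ₗ[ℂ] H₁) = ⊥,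
       adjoint U ∘L U = 1 ∧ U ∘L adjoint U = 1,
       LinearMap.ker (A : H₁ →ₗ[ℂ] H₁) = ⊥ ∧ LinearMap.ker ((1 - A : H₁ →L[ℂ] H₁) : H₁ →ₗ[ℂ] H₁) = ⊥ ∧
         LinearMap.ker ((U ∘L (1 - A) ∘L adjoint U + Q₀ : H₂ →L[ℂ] H₂) : H₂ →ₗ[ℂ] H₂) = ⊥ ∧
         LinearMap.ker ((1 - (U ∘L (1 - A) ∘L adjoint U + Q₀) : H₂ →L[ℂ] H₂) : H₂ →ₗ[ℂ] H₂) = ⊥] := by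
  simp only [LinearMap.ker_eq_bot, coe_coe]
  have hT : IsSelfAdjoint (A * A - A) := by simpa only [sq] using (hAsa.pow 2).sub hAsa
  have hUU : adjoint U ∘L U = 1 ↔ Function.Injective ⇑(A * A - A) := by
    rw [hU, QPP.closRangeProj_eq_one_iff, hT.adjoint_eq]
  tfae_have h12 : 1 ↔ 2 := by rw [injective_mul_self_sub_iff, and_assoc]
  tfae_have h23 : 2 ↔ 3 := by
    rw [← hUU]
    exact ⟨fun ⟨h₁, h₂⟩ => ⟨h₁, (comp_adjoint_eq_one_iff h₁).mpr h₂⟩,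
      fun ⟨h₁, h₂⟩ => ⟨h₁, (comp_adjoint_eq_one_iff h₁).mp h₂⟩⟩
  tfae_have 1 → 4 := by
    intro h₁
    obtain ⟨hUU, hUU'⟩ := h23.mp (h12.mp h₁)
    obtain ⟨hA, h1A, -⟩ := h₁
    have hQ₀ : Q₀ = U ∘L (adjoint U ∘L Q₀) := by rw [← comp_assoc, hUU']; rfl
    rw [hUQ₀, comp_zero] at hQ₀
    rw [hQ₀, add_zero, one_sub_comp_one_sub_comp hUU']
    exact ⟨hA, h1A, injective_comp_comp hUU hUU' h1A, injective_comp_comp hUU hUU' hA⟩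
  tfae_have 4 → 1 := fun ⟨hA, h1A, hQ, hQ'⟩ =>
    ⟨hA, h1A, injective_of_injective_add_of_injective_one_sub hQ₀idem hUQ₀ hQ hQ'⟩
  tfae_finish

open ContinuousLinearMap in
/-- Let `A ∈ B(H₁)` be self-adjoint with `A² - A ≥ 0`, `U ∈ B(H₁, H₂)` with `U* U` the
orthogonal projection onto the closure of `ran(A² - A)`, and `Q₀ ∈ B(H₂)` a projection with
`U* Q₀ = 0`.  With `Q₂₂ = U (1 - A) U* + Q₀`, the following are equivalent:
(i) `ker A = ker (1 - A) = 0` and `ker U* = 0`;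
(ii) `ker (A² - A) = 0` and `ker U* = 0`;
(iii) `U` is unitary;
(iv) `ker A = ker (1 - A) = 0` and `ker Q₂₂ = ker (1 - Q₂₂) = 0`. -/
theorem canonicalRep_unitary_tfae (A : H₁ →L[ℂ] H₁) (U : H₁ →L[ℂ] H₂) (Q₀ : H₂ →L[ℂ] H₂)
    (hAsa : IsSelfAdjoint A) (hApos : 0 ≤ A * A - A)
    (hU : adjoint U ∘L U = QPP.closRangeProj (A * A - A))
    (hQ₀idem : IsIdempotentElem Q₀) (hQ₀sa : IsSelfAdjoint Q₀)
    (hUQ₀ : adjoint U ∘L Q₀ = 0) :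
    List.TFAE
      [LinearMap.ker (A : H₁ →ₗ[ℂ] H₁) = ⊥ ∧ LinearMap.ker ((1 - A : H₁ →L[ℂ] H₁) : H₁ →ₗ[ℂ] H₁) = ⊥ ∧ LinearMap.ker (adjoint U : H₂ →ₗ[ℂ] H₁) = ⊥,
       LinearMap.ker ((A * A - A : H₁ →L[ℂ] H₁) : H₁ →ₗ[ℂ] H₁) = ⊥ ∧ LinearMap.ker (adjoint U : H₂ →ₗ[ℂ] H₁) = ⊥,
       adjoint U ∘L U = 1 ∧ U ∘L adjoint U = 1,
       LinearMap.ker (A : H₁ →ₗ[ℂ] H₁) = ⊥ ∧ LinearMap.ker ((1 - A : H₁ →L[ℂ] H₁) : H₁ →ₗ[ℂ] H₁) = ⊥ ∧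
         LinearMap.ker ((U ∘L (1 - A) ∘L adjoint U + Q₀ : H₂ →L[ℂ] H₂) : H₂ →ₗ[ℂ] H₂) = ⊥ ∧
         LinearMap.ker ((1 - (U ∘L (1 - A) ∘L adjoint U + Q₀) : H₂ →L[ℂ] H₂) : H₂ →ₗ[ℂ] H₂) = ⊥] :=
  canonicalRep_unitary_tfae_general A U Q₀ hAsa hU hQ₀idem hUQ₀
end
end

section
/- Let H be a complex Hilbert space, Q ∈ B(H) an idempotent, and U ∈ B(H) a partial isometry (i.e. U U* U = U) satisfying U*UQ = QU*U. Then UQU* is an idempotent and m(UQU*) = U·m(Q)·U*. -/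
/- For an idempotent `Q` on a complex Hilbert space `H`, we define (in `B(H)`):
the orthogonal projection onto the closure of the range of an operator,
the range projection `P_{ran Q} = Q (Q + Q* - 1)⁻¹`,
`|Q*| = (Q Q*)^{1/2}`, its Moore-Penrose inverse
`|Q*|^† = (P_{ran Q} P_{ran Q*} P_{ran Q})^{1/2}`,
the matched projection `m(Q) = (1/2)(|Q*| + Q*) |Q*|^† (|Q*| + 1)⁻¹ (|Q*| + Q)`,
and the supplementary projection `s(Q) = m(2 P_{ran Q} - Q)`. -/

noncomputable section

variable {H : Type*} [NormedAddCommGroup H] [InnerProductSpace ℂ H] [CompleteSpace H]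

/- Proof idea.  `E = U* U` is a projection commuting with `Q`, and on the commutant of `E` the
map `X ↦ U X U*` is multiplicative, commutes with `star`, and commutes with square roots of
positive elements.  The two inverses occurring in `m` become inverses of operators of the form
`U X U* ± (1 - U U*)`, and `1 - U U*` is an orthogonal summand killed by every `U X U*`, so they
are again conjugates.  Thus every factor of `m(U Q U*)` is the conjugate of the corresponding
factor of `m(Q)`. -/

open CFC

theorem SemiconjBy.ringInverse_symm_left {M₀ : Type*} [MonoidWithZero M₀] {u a b : M₀}
    (hu : IsUnit u) (h : SemiconjBy u a b) : SemiconjBy (Ring.inverse u) b a := by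
  obtain ⟨u, rfl⟩ := hu
  rw [Ring.inverse_unit]
  exact h.units_inv_symm_left

theorem Commute.ringInverse_right {M₀ : Type*} [MonoidWithZero M₀] {a b : M₀}
    (h : Commute a b) : Commute a (Ring.inverse b) := by
  by_cases hb : IsUnit b
  · obtain ⟨u, rfl⟩ := hb
    rw [Ring.inverse_unit]
    exact h.units_inv_right
  · rw [Ring.inverse_non_unit b hb]
    exact Commute.zero_right a

section StarRing

variable {R : Type*} [Ring R] [StarRing R] {U : R}

theorem star_mul_mul_star_of_mul_star_mul (hU : U * star U * U = U) :
    star U * U * star U = star U := by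
  simpa only [star_mul, star_star, mul_assoc] using congrArg star hU

theorem commute_star_mul_self_star {X : R} (hX : Commute (star U * U) X) :
    Commute (star U * U) (star X) := by
  simpa only [star_mul, star_star] using hX.star_star

theorem star_conj (X : R) : star (U * X * star U) = U * star X * star U := by
  rw [star_mul, star_mul, star_star, mul_assoc]

theorem conj_mul_conj (hU : U * star U * U = U) {X : R} (hX : Commute (star U * U) X) (Y : R) :
    U * X * star U * (U * Y * star U) = U * (X * Y) * star U := by
  calc U * X * star U * (U * Y * star U) = U * (X * (star U * U)) * Y * star U := by
        noncomm_ring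
    _ = U * star U * U * (X * Y) * star U := by rw [← hX.eq]; noncomm_ring
    _ = U * (X * Y) * star U := by rw [hU]

theorem conj_mul_one_sub_mul_star (hU : U * star U * U = U) (X : R) :
    U * X * star U * (1 - U * star U) = 0 := by
  rw [mul_sub, mul_one, mul_assoc (U * X) (star U), ← mul_assoc (star U) U,
    star_mul_mul_star_of_mul_star_mul hU, sub_self]

theorem one_sub_mul_star_mul_conj (hU : U * star U * U = U) (X : R) :
    (1 - U * star U) * (U * X * star U) = 0 := by
  rw [sub_mul, one_mul, ← mul_assoc, ← mul_assoc, hU, sub_self]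

/-- With `F = 1 - U U*`, which annihilates every `U X U*` on both sides,
`(U X U* + c F) (U Y U* + d F) = U (X Y) U* + (c d) F` whenever `X` commutes with `U* U`. -/
theorem Ring.inverse_conj_add_smul {𝕜 : Type*} [Field 𝕜] [Algebra 𝕜 R]
    (hU : U * star U * U = U) {X : R} (hX : Commute (star U * U) X) (hXu : IsUnit X)
    {c : 𝕜} (hc : c ≠ 0) :
    Ring.inverse (U * X * star U + c • (1 - U * star U)) =
      U * Ring.inverse X * star U + c⁻¹ • (1 - U * star U) := by
  have hF : (1 - U * star U) * (1 - U * star U) = 1 - U * star U := by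
    simp only [mul_sub, sub_mul, one_mul, mul_one, ← mul_assoc, hU, sub_self, zero_mul, sub_zero]
  have hX' : Commute (star U * U) (Ring.inverse X) := hX.ringInverse_right
  refine Ring.inverse_unit ⟨_, _, ?_, ?_⟩
  · simp only [mul_add, add_mul, smul_mul_assoc, mul_smul_comm, conj_mul_conj hU hX,
      conj_mul_one_sub_mul_star hU, one_sub_mul_star_mul_conj hU, hF, smul_smul,
      Ring.mul_inverse_cancel X hXu, smul_zero, add_zero, zero_add]
    rw [inv_mul_cancel₀ hc, one_smul, mul_one, add_sub_cancel]
  · simp only [mul_add, add_mul, smul_mul_assoc, mul_smul_comm, conj_mul_conj hU hX',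
      conj_mul_one_sub_mul_star hU, one_sub_mul_star_mul_conj hU, hF, smul_smul,
      Ring.inverse_mul_cancel X hXu, smul_zero, add_zero, zero_add]
    rw [mul_inv_cancel₀ hc, one_smul, mul_one, add_sub_cancel]

end StarRing

section CStarAlgebra

variable {A : Type*} [CStarAlgebra A] [PartialOrder A] [StarOrderedRing A]

theorem Commute.sqrt_right {a b : A} (h : Commute a b) : Commute a (sqrt b) := by
  rw [sqrt_eq_cfc]
  exact (h.symm.cfc_nnreal _).symm

theorem CFC.sqrt_conj {U X : A} (hU : U * star U * U = U) (hX₀ : 0 ≤ X)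
    (hX : Commute (star U * U) X) : sqrt (U * X * star U) = U * sqrt X * star U :=
  sqrt_unique (by rw [conj_mul_conj hU hX.sqrt_right, sqrt_mul_sqrt_self X hX₀])
    (star_right_conjugate_nonneg (sqrt_nonneg X) U)

/-- `(Q + Q* - 1)² = 1 + (Q - Q*)(Q - Q*)* ≥ 1`. -/
theorem isUnit_add_star_sub_one {Q : A} (hQ : IsIdempotentElem Q) : IsUnit (Q + star Q - 1) := by
  set R := Q + star Q - 1
  have hRR : R * R = 1 + (Q - star Q) * star (Q - star Q) := by
    simp only [R, star_sub, star_star, mul_sub, sub_mul, mul_add, add_mul, mul_one, one_mul,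
      hQ.eq, hQ.star.eq]
    abel
  have hRR_unit : IsUnit (R * R) :=
    CStarAlgebra.isUnit_of_le 1 (hRR ▸ le_add_of_nonneg_right (mul_star_self_nonneg _))
  exact ((Commute.refl R).isUnit_mul_iff.mp hRR_unit).1

end CStarAlgebra

namespace QPP

theorem isUnit_absStar_add_one (Q : H →L[ℂ] H) : IsUnit (absStar Q + 1) :=
  CStarAlgebra.isUnit_of_le 1 (le_add_of_nonneg_left (sqrt_nonneg _))

theorem isStarProjection_rangeProj {Q : H →L[ℂ] H} (hQ : IsIdempotentElem Q) :
    IsStarProjection (rangeProj Q) := by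
  have hR := isUnit_add_star_sub_one hQ
  have hQR : Q * (Q + star Q - 1) = Q * star Q := by
    simp only [mul_sub, mul_add, hQ.eq, mul_one]; abel
  have hRQ : SemiconjBy (Q + star Q - 1) Q (star Q) := by
    simp only [SemiconjBy, mul_sub, mul_add, sub_mul, add_mul, hQ.eq, hQ.star.eq, one_mul,
      mul_one]; abel
  have hRQs : SemiconjBy (Q + star Q - 1) (star Q) Q := by
    simp only [SemiconjBy, mul_sub, mul_add, sub_mul, add_mul, hQ.eq, hQ.star.eq, one_mul,
      mul_one]; abel
  have hRs : IsSelfAdjoint (Q + star Q - 1) := by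
    simp only [IsSelfAdjoint, star_sub, star_add, star_star, star_one, add_comm]
  unfold rangeProj
  constructor
  · calc Q * Ring.inverse (Q + star Q - 1) * (Q * Ring.inverse (Q + star Q - 1))
        = Q * (Ring.inverse (Q + star Q - 1) * Q) * Ring.inverse (Q + star Q - 1) := by
          noncomm_ring
      _ = Q * (Q + star Q - 1) * (Ring.inverse (Q + star Q - 1) *
            Ring.inverse (Q + star Q - 1)) := by
          rw [(hRQs.ringInverse_symm_left hR).eq, hQR]; noncomm_ring
      _ = Q * Ring.inverse (Q + star Q - 1) := by
          rw [← mul_assoc, mul_assoc Q, Ring.mul_inverse_cancel _ hR, mul_one]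
  · rw [IsSelfAdjoint, star_mul, hRs.ringInverse.star_eq]
    exact (hRQ.ringInverse_symm_left hR).eq

variable {a : H →L[ℂ] H}

theorem commute_rangeProj {Q : H →L[ℂ] H} (h : Commute a Q) (h' : Commute a (star Q)) :
    Commute a (rangeProj Q) :=
  h.mul_right ((h.add_right h').sub_right (.one_right a)).ringInverse_right

theorem commute_absStar {Q : H →L[ℂ] H} (h : Commute a Q) (h' : Commute a (star Q)) :
    Commute a (absStar Q) :=
  (h.mul_right h').sqrt_right

theorem commute_absStarPinv {Q : H →L[ℂ] H} (h : Commute a Q) (h' : Commute a (star Q)) :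
    Commute a (absStarPinv Q) :=
  have hP := commute_rangeProj h h'
  ((hP.mul_right (commute_rangeProj h' (by rwa [star_star]))).mul_right hP).sqrt_right

variable {U Q : H →L[ℂ] H}

theorem rangeProj_conj (hU : U * star U * U = U) (hQ : IsIdempotentElem Q)
    (hQU : Commute (star U * U) Q) :
    rangeProj (U * Q * star U) = U * rangeProj Q * star U := by
  have hR : U * Q * star U + star (U * Q * star U) - 1 =
      U * (Q + star Q - 1) * star U + (-1 : ℂ) • (1 - U * star U) := by
    rw [star_conj, neg_one_smul]; noncomm_ring
  have hRU : Commute (star U * U) (Q + star Q - 1) :=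
    (hQU.add_right (commute_star_mul_self_star hQU)).sub_right (.one_right _)
  unfold rangeProj
  rw [hR, Ring.inverse_conj_add_smul hU hRU (isUnit_add_star_sub_one hQ) (by norm_num), mul_add,
    conj_mul_conj hU hQU, mul_smul_comm, conj_mul_one_sub_mul_star hU, smul_zero, add_zero]

theorem absStar_conj (hU : U * star U * U = U) (hQU : Commute (star U * U) Q) :
    absStar (U * Q * star U) = U * absStar Q * star U := by
  unfold absStar
  rw [star_conj, conj_mul_conj hU hQU,
    sqrt_conj hU (mul_star_self_nonneg Q) (hQU.mul_right (commute_star_mul_self_star hQU))]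

theorem absStarPinv_conj (hU : U * star U * U = U) (hQ : IsIdempotentElem Q)
    (hQU : Commute (star U * U) Q) :
    absStarPinv (U * Q * star U) = U * absStarPinv Q * star U := by
  have hQsU := commute_star_mul_self_star hQU
  have hPU := commute_rangeProj hQU hQsU
  have hPsU := commute_rangeProj hQsU (by rwa [star_star])
  have hP := isStarProjection_rangeProj hQ
  have hPs := isStarProjection_rangeProj hQ.star
  unfold absStarPinv
  rw [rangeProj_conj hU hQ hQU, star_conj, rangeProj_conj hU hQ.star hQsU, conj_mul_conj hU hPU,
    conj_mul_conj hU (hPU.mul_right hPsU),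
    sqrt_conj hU (IsSelfAdjoint.conjugate_nonneg hPs.nonneg hP.isSelfAdjoint)
      ((hPU.mul_right hPsU).mul_right hPU)]

theorem matchedProj_conj (hU : U * star U * U = U) (hQ : IsIdempotentElem Q)
    (hQU : Commute (star U * U) Q) :
    matchedProj (U * Q * star U) = U * matchedProj Q * star U := by
  have hQsU := commute_star_mul_self_star hQU
  have hTU := commute_absStar hQU hQsU
  have hinv : Ring.inverse (U * absStar Q * star U + 1) =
      U * Ring.inverse (absStar Q + 1) * star U + (1 : ℂ)⁻¹ • (1 - U * star U) := by
    rw [← Ring.inverse_conj_add_smul hU (hTU.add_right (.one_right _)) (isUnit_absStar_add_one Q)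
      one_ne_zero, one_smul, mul_add, add_mul, mul_one, add_add_sub_cancel]
  have hLeftU := (hTU.add_right hQsU).mul_right (commute_absStarPinv hQU hQsU)
  have hLeftJU := hLeftU.mul_right (hTU.add_right (.one_right _)).ringInverse_right
  unfold matchedProj
  rw [absStar_conj hU hQU, star_conj, absStarPinv_conj hU hQ hQU, hinv, ← add_mul, ← mul_add,
    ← add_mul, ← mul_add, conj_mul_conj hU (hTU.add_right hQsU), mul_add, conj_mul_conj hU hLeftU,
    mul_smul_comm, conj_mul_one_sub_mul_star hU, smul_zero, add_zero, conj_mul_conj hU hLeftJU,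
    mul_smul_comm, smul_mul_assoc]

end QPP

/-- If `Q` is an idempotent and `U` is a partial isometry with `U* U Q = Q U* U`, then
`U Q U*` is an idempotent and `m(U Q U*) = U m(Q) U*`. -/
theorem matchedProj_conj_partialIsometry (Q U : H →L[ℂ] H)
    (hQ : IsIdempotentElem Q) (hU : U * star U * U = U)
    (hcomm : star U * U * Q = Q * (star U * U)) :
    IsIdempotentElem (U * Q * star U) ∧
      QPP.matchedProj (U * Q * star U) = U * QPP.matchedProj Q * star U :=
  ⟨by rw [IsIdempotentElem, conj_mul_conj hU hcomm, hQ.eq], QPP.matchedProj_conj hU hQ hcomm⟩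
end
end

section
/- Let H be a complex Hilbert space and A ∈ B(H) self-adjoint with A² − A ≥ 0. Set L = (A² − A)^{1/2} and |A − 1| = ((A − 1)²)^{1/2} (positive square roots), and define Ω on the Hilbert space direct sum H ⊕₂ H by Ω(x, y) = ((1 − A)x + Ly, −Lx + (A − 1)y). Then ‖Ω‖ = ‖ |A − 1| + L ‖ and ‖Ω²‖ = ‖A − 1‖. -/
/-!
Write `B = A - 1` and `L = (A² - A)^{1/2}`, a nonnegative continuous function of `B` with
`L² = B² + B`; so `Ω = [[-B, L], [-L, B]]` has commuting entries and `Ω² = -(B ⊕ B)`, whence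
`‖Ω²‖ = ‖B‖`. In the coordinates `(u + v, u - v)`, which scale the ℓ²-norm by `√2`, `Ω` becomes
the anti-diagonal operator with entries `L - B` and `-(L + B)`, so `‖Ω‖ = max ‖L - B‖ ‖L + B‖`.
Since `|b| + l = max |l + b| |l - b|` for `l ≥ 0`, the isometric functional calculus of `B`
identifies this maximum with `‖|B| + L‖`.
-/

open WithLp

section CFC

variable {𝕜 A : Type*} {p : A → Prop} [RCLike 𝕜] [NormedRing A] [StarRing A]
  [NormedAlgebra 𝕜 A] [IsometricContinuousFunctionalCalculus 𝕜 A p]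

lemma norm_cfc_eq_max_of_norm_eq_max {f g h : 𝕜 → 𝕜} {a : A}
    (hfgh : ∀ x ∈ spectrum 𝕜 a, ‖f x‖ = max ‖g x‖ ‖h x‖)
    (hf : ContinuousOn f (spectrum 𝕜 a)) (hg : ContinuousOn g (spectrum 𝕜 a))
    (hh : ContinuousOn h (spectrum 𝕜 a)) (ha : p a) :
    ‖cfc f a‖ = max ‖cfc g a‖ ‖cfc h a‖ := by
  refine le_antisymm (norm_cfc_le (by positivity) fun x hx => ?_) (max_le ?_ ?_)
  · rw [hfgh x hx]
    exact max_le_max (norm_apply_le_norm_cfc g a hx hg ha) (norm_apply_le_norm_cfc h a hx hh ha)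
  · exact norm_cfc_le (norm_nonneg _) fun x hx =>
      (hfgh x hx ▸ le_max_left _ _).trans (norm_apply_le_norm_cfc f a hx hf ha)
  · exact norm_cfc_le (norm_nonneg _) fun x hx =>
      (hfgh x hx ▸ le_max_right _ _).trans (norm_apply_le_norm_cfc f a hx hf ha)

end CFC

lemma abs_add_eq_max_abs_add_abs_sub {b l : ℝ} (hl : 0 ≤ l) : |b| + l = max |l + b| |l - b| := by
  rcases le_total 0 b with hb | hb
  · rw [abs_of_nonneg hb, abs_of_nonneg (by linarith : 0 ≤ l + b),
      max_eq_left (abs_le.2 ⟨by linarith, by linarith⟩), add_comm]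
  · rw [abs_of_nonpos hb, abs_of_nonneg (by linarith : 0 ≤ l - b),
      max_eq_right (abs_le.2 ⟨by linarith, by linarith⟩), neg_add_eq_sub]

section CStar

variable {A : Type*} [CStarAlgebra A] [PartialOrder A] [StarOrderedRing A]

lemma norm_abs_add_cfc_eq_max (a : A) {g : ℝ → ℝ} (hg : ∀ t ∈ spectrum ℝ a, 0 ≤ g t)
    (hgc : ContinuousOn g (spectrum ℝ a) := by cfc_cont_tac) (ha : IsSelfAdjoint a := by cfc_tac) :
    ‖CFC.abs a + cfc g a‖ = max ‖cfc g a + a‖ ‖cfc g a - a‖ := by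
  have hadd : cfc g a + a = cfc (fun t => g t + t) a := by rw [cfc_add .., cfc_id' ..]
  have hsub : cfc g a - a = cfc (fun t => g t - t) a := by rw [cfc_sub .., cfc_id' ..]
  rw [CFC.abs_eq_cfc_norm a, ← cfc_add .., hadd, hsub]
  refine norm_cfc_eq_max_of_norm_eq_max (fun t ht => ?_)
    (by fun_prop) (by fun_prop) (by fun_prop) ha
  simp only [Real.norm_eq_abs]
  rw [abs_of_nonneg (add_nonneg (abs_nonneg t) (hg t ht)), abs_add_eq_max_abs_add_abs_sub (hg t ht)]

lemma CFC.sqrt_cfc (f : ℝ → ℝ) (a : A) (h0 : 0 ≤ cfc f a)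
    (hf : ContinuousOn f (spectrum ℝ a) := by cfc_cont_tac) (ha : IsSelfAdjoint a := by cfc_tac) :
    CFC.sqrt (cfc f a) = cfc (fun t => √(f t)) a := by
  rw [CFC.sqrt_eq_real_sqrt _ h0, cfcₙ_eq_cfc, cfc_comp' Real.sqrt f a]

end CStar

namespace ContinuousLinearMap

variable {𝕜 E F : Type*} [NontriviallyNormedField 𝕜] [SeminormedAddCommGroup E]
  [SeminormedAddCommGroup F] [NormedSpace 𝕜 E] [NormedSpace 𝕜 F]

lemma norm_apply_sq_le (f : E →L[𝕜] F) (x : E) : ‖f x‖ ^ 2 ≤ ‖f‖ ^ 2 * ‖x‖ ^ 2 := by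
  rw [← mul_pow]
  exact pow_le_pow_left₀ (norm_nonneg _) (f.le_opNorm x) 2

lemma opNorm_le_of_sq {f : E →L[𝕜] F} {C : ℝ} (hC : 0 ≤ C)
    (h : ∀ x, ‖f x‖ ^ 2 ≤ C ^ 2 * ‖x‖ ^ 2) : ‖f‖ ≤ C :=
  f.opNorm_le_bound hC fun x =>
    le_of_pow_le_pow_left₀ two_ne_zero (by positivity) (by rw [mul_pow]; exact h x)

end ContinuousLinearMap

section HilbertSum

open ContinuousLinearMap

variable {𝕜 E : Type*} [RCLike 𝕜] [NormedAddCommGroup E] [InnerProductSpace 𝕜 E]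

lemma norm_toLp_sq (x y : E) : ‖toLp 2 (x, y)‖ ^ 2 = ‖x‖ ^ 2 + ‖y‖ ^ 2 :=
  prod_norm_sq_eq_of_L2 _

include 𝕜 in
lemma norm_toLp_add_sub_sq (u v : E) :
    ‖toLp 2 (u + v, u - v)‖ ^ 2 = 2 * ‖toLp 2 (u, v)‖ ^ 2 := by
  rw [norm_toLp_sq, norm_toLp_sq]
  linarith [parallelogram_law_with_norm 𝕜 u v]

include 𝕜 in
lemma exists_eq_toLp_add_sub (z : WithLp 2 (E × E)) : ∃ u v : E, z = toLp 2 (u + v, u - v) := by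
  refine ⟨(2 : 𝕜)⁻¹ • (z.fst + z.snd), (2 : 𝕜)⁻¹ • (z.fst - z.snd), ?_⟩
  rw [← toLp_ofLp _ z]
  congr 1
  ext <;> simp only [ofLp_fst, ofLp_snd] <;> module

variable (T : WithLp 2 (E × E) →L[𝕜] WithLp 2 (E × E))

lemma opNorm_eq_of_acts_diagonally (C : E →L[𝕜] E)
    (hT : ∀ x y, T (toLp 2 (x, y)) = toLp 2 (C x, C y)) : ‖T‖ = ‖C‖ := by
  refine le_antisymm (opNorm_le_of_sq (norm_nonneg C) fun z => ?_)
    (opNorm_le_of_sq (norm_nonneg T) fun x => ?_)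
  · have hz : z = toLp 2 (z.fst, z.snd) := rfl
    rw [hz, hT, norm_toLp_sq, norm_toLp_sq, mul_add]
    exact add_le_add (C.norm_apply_sq_le _) (C.norm_apply_sq_le _)
  · have h := T.norm_apply_sq_le (toLp 2 (x, 0))
    rwa [hT, map_zero, norm_toLp_sq, norm_toLp_sq, norm_zero, zero_pow two_ne_zero, add_zero,
      add_zero] at h

lemma opNorm_eq_max_of_apply_toLp_add_sub (R S : E →L[𝕜] E)
    (hT : ∀ u v, T (toLp 2 (u + v, u - v)) = toLp 2 (S v + R u, S v - R u)) :
    ‖T‖ = max ‖R‖ ‖S‖ := by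
  have hnorm : ∀ u v, ‖T (toLp 2 (u + v, u - v))‖ ^ 2 = 2 * (‖R u‖ ^ 2 + ‖S v‖ ^ 2) := by
    intro u v
    rw [hT, norm_toLp_add_sub_sq (𝕜 := 𝕜), norm_toLp_sq, add_comm (‖S v‖ ^ 2)]
  have hbound : ∀ u v, ‖T (toLp 2 (u + v, u - v))‖ ^ 2 ≤ ‖T‖ ^ 2 * (2 * (‖u‖ ^ 2 + ‖v‖ ^ 2)) := by
    intro u v
    rw [← norm_toLp_sq, ← norm_toLp_add_sub_sq (𝕜 := 𝕜)]
    exact T.norm_apply_sq_le _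
  refine le_antisymm (opNorm_le_of_sq (by positivity) fun z => ?_) (max_le ?_ ?_)
  · obtain ⟨u, v, rfl⟩ := exists_eq_toLp_add_sub (𝕜 := 𝕜) z
    have hR := R.norm_apply_sq_le u
    have hS := S.norm_apply_sq_le v
    have hRM : ‖R‖ ^ 2 ≤ max ‖R‖ ‖S‖ ^ 2 := pow_le_pow_left₀ (norm_nonneg _) (le_max_left _ _) 2
    have hSM : ‖S‖ ^ 2 ≤ max ‖R‖ ‖S‖ ^ 2 := pow_le_pow_left₀ (norm_nonneg _) (le_max_right _ _) 2
    rw [hnorm, norm_toLp_add_sub_sq (𝕜 := 𝕜), norm_toLp_sq]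
    nlinarith [sq_nonneg ‖u‖, sq_nonneg ‖v‖]
  · refine opNorm_le_of_sq (norm_nonneg T) fun u => ?_
    have h := hbound u 0
    rw [hnorm, map_zero, norm_zero] at h
    linarith
  · refine opNorm_le_of_sq (norm_nonneg T) fun v => ?_
    have h := hbound 0 v
    rw [hnorm, map_zero, norm_zero] at h
    linarith

end HilbertSum

section BlockOperator

variable {𝕜 E : Type*} [RCLike 𝕜] [NormedAddCommGroup E] [InnerProductSpace 𝕜 E]
  {B L : E →L[𝕜] E} {T : WithLp 2 (E × E) →L[𝕜] WithLp 2 (E × E)}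
  (hT : ∀ x y, T (toLp 2 (x, y)) = toLp 2 (-(B x) + L y, -(L x) + B y))
include hT

lemma apply_toLp_add_sub_of_block (u v : E) :
    T (toLp 2 (u + v, u - v)) = toLp 2 ((-(L + B)) v + (L - B) u, (-(L + B)) v - (L - B) u) := by
  rw [hT]
  congr 2 <;> simp only [map_add, map_sub, add_apply, sub_apply, neg_apply] <;> abel

lemma mul_self_apply_toLp_of_block (hLL : L * L = B * B + B) (hBL : Commute B L) (x y : E) :
    (T * T) (toLp 2 (x, y)) = toLp 2 ((-B) x, (-B) y) := by
  have hLL' : ∀ v, L (L v) = B (B v) + B v := fun v => congr($hLL v)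
  have hBL' : ∀ v, B (L v) = L (B v) := fun v => congr($hBL.eq v)
  rw [mul_apply_eq_comp, hT, hT]
  congr 2 <;> simp only [map_add, map_neg, hLL', hBL', neg_apply] <;> abel

lemma opNorm_eq_max_of_block : ‖T‖ = max ‖L - B‖ ‖L + B‖ := by
  rw [opNorm_eq_max_of_apply_toLp_add_sub T _ _ (apply_toLp_add_sub_of_block hT), norm_neg]

lemma opNorm_mul_self_of_block (hLL : L * L = B * B + B) (hBL : Commute B L) :
    ‖T * T‖ = ‖B‖ := by
  rw [opNorm_eq_of_acts_diagonally _ _ (mul_self_apply_toLp_of_block hT hLL hBL), norm_neg]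

end BlockOperator

variable {H : Type*} [NormedAddCommGroup H] [InnerProductSpace ℂ H] [CompleteSpace H]

/-- Let `A` be self-adjoint with `A² - A ≥ 0`, `L = (A² - A)^{1/2}` and
`|A - 1| = ((A - 1)²)^{1/2}`, and let `Ω` act on `H ⊕₂ H` by
`Ω(x, y) = ((1 - A)x + Ly, -Lx + (A - 1)y)`.  Then `‖Ω‖ = ‖|A - 1| + L‖` and
`‖Ω²‖ = ‖A - 1‖`. -/
theorem norm_Omega_eq (A : H →L[ℂ] H) (hA : IsSelfAdjoint A) (hpos : 0 ≤ A * A - A)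
    (Ω : WithLp 2 (H × H) →L[ℂ] WithLp 2 (H × H))
    (hΩ : ∀ x y : H, Ω ((WithLp.equiv 2 (H × H)).symm (x, y)) =
      (WithLp.equiv 2 (H × H)).symm
        ((1 - A) x + CFC.sqrt (A * A - A) y, -(CFC.sqrt (A * A - A) x) + (A - 1) y)) :
    ‖Ω‖ = ‖CFC.sqrt ((A - 1) * (A - 1)) + CFC.sqrt (A * A - A)‖ ∧
    ‖Ω * Ω‖ = ‖A - 1‖ := by
  set B := A - 1 with hBdef
  set L := CFC.sqrt (A * A - A) with hLdef
  have hB : IsSelfAdjoint B := hA.sub (.one _)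
  have hAA : A * A - A = cfc (fun t : ℝ => t * t + t) B := by
    rw [cfc_add .., cfc_mul .., cfc_id' .., hBdef]
    noncomm_ring
  have hL : L = cfc (fun t : ℝ => √(t * t + t)) B := by
    rw [hLdef, hAA]
    exact CFC.sqrt_cfc _ _ (hAA ▸ hpos)
  have hLL : L * L = B * B + B := by
    rw [hLdef, CFC.sqrt_mul_sqrt_self _ hpos, hBdef]
    noncomm_ring
  have hBL : Commute B L := by
    rw [hL]
    simpa only [cfc_id' ℝ B] using cfc_commute_cfc (R := ℝ) (fun t => t) _ B
  have hT : ∀ x y, Ω (toLp 2 (x, y)) = toLp 2 (-(B x) + L y, -(L x) + B y) := by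
    simpa only [WithLp.equiv_symm_apply, ← neg_sub A 1, neg_apply] using hΩ
  have habs : CFC.sqrt (B * B) = CFC.abs B := by rw [CFC.abs, hB.star_eq]
  refine ⟨?_, opNorm_mul_self_of_block hT hLL hBL⟩
  rw [opNorm_eq_max_of_block hT, habs, hL,
    norm_abs_add_cfc_eq_max B fun t _ => Real.sqrt_nonneg _, max_comm]
end

section
/- Let H be a complex Hilbert space and let (P,Q) be a quasi-projection pair on H. Then ‖(1−P)Q‖ = ‖Q(1−P)‖ and ‖(1−Q)P‖ = ‖P(1−Q)‖, and moreover ‖(P−Q)²‖ ≤ max{‖(1−P)Q‖, ‖(1−Q)P‖} ≤ ‖P−Q‖. -/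
noncomputable section

variable {H : Type*} [NormedAddCommGroup H] [InnerProductSpace ℂ H] [CompleteSpace H]

/-!
With `U = 2P - 1`, a self-adjoint unitary, the relation `Q* = UQU` gives `Q*(1 - P) = -UQ(1 - P)`
and `P(1 - Q*) = P(1 - Q)U`; taking adjoints yields the two norm equalities. The square
`(P - Q)²` commutes with `P`, with compressions `P(1 - Q)P` and `(1 - P)Q(1 - P)`, and by
Pythagoras an operator commuting with an orthogonal projection has norm at most the larger of its
two compressions. The last bound comes from `(1 - P)Q = (1 - P)(Q - P)` and `(1 - Q)P = (P - Q)P`.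
-/

open scoped InnerProductSpace

section Ring
variable {R : Type*} [Ring R] {p q : R}

namespace IsIdempotentElem

theorem two_mul_sub_one_mul_self (hp : IsIdempotentElem p) :
    (2 * p - 1) * (2 * p - 1) = 1 := by
  simp only [two_mul, mul_sub, sub_mul, add_mul, mul_add, hp.eq, mul_one, one_mul]
  abel

theorem mul_two_mul_sub_one (hp : IsIdempotentElem p) : p * (2 * p - 1) = p := by
  simp only [two_mul, mul_sub, mul_add, hp.eq, mul_one]
  abel

theorem two_mul_sub_one_mul_one_sub (hp : IsIdempotentElem p) :
    (2 * p - 1) * (1 - p) = -(1 - p) := by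
  simp only [two_mul, mul_sub, sub_mul, add_mul, hp.eq, mul_one, one_mul]
  abel

theorem mul_sub_mul_sub (hp : IsIdempotentElem p) (hq : IsIdempotentElem q) :
    p * ((p - q) * (p - q)) = p * ((1 - q) * p) := by
  simp only [mul_sub, sub_mul, one_mul, hp.eq, hq.eq, hp.mul_self_mul]
  abel

theorem one_sub_mul_sub_mul_sub (hp : IsIdempotentElem p) (hq : IsIdempotentElem q) :
    (1 - p) * ((p - q) * (p - q)) = (1 - p) * q * (1 - p) := by
  simp only [mul_sub, sub_mul, mul_one, one_mul, mul_assoc, hp.eq, hq.eq, hp.mul_self_mul]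
  abel

theorem commute_sub_mul_sub (hp : IsIdempotentElem p) (hq : IsIdempotentElem q) :
    Commute p ((p - q) * (p - q)) := by
  simp only [Commute, SemiconjBy, mul_sub, sub_mul, mul_assoc, hp.eq, hq.eq, hp.mul_self_mul]
  abel

theorem mul_eq_mul_mul_self_of_commute (hp : IsIdempotentElem p) (h : Commute p q) :
    p * q = p * q * p := by
  rw [mul_assoc, ← h.eq, ← mul_assoc, hp.eq]

end IsIdempotentElem

end Ring

section CStarRing
variable {A : Type*} [NormedRing A] [StarRing A] [CStarRing A] {p q : A}

namespace IsStarProjection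

theorem norm_mul_le_left (hp : IsStarProjection p) (a : A) : ‖p * a‖ ≤ ‖a‖ :=
  (norm_mul_le _ _).trans (mul_le_of_le_one_left (norm_nonneg _) (norm_le p hp))

theorem norm_mul_le_right (hp : IsStarProjection p) (a : A) : ‖a * p‖ ≤ ‖a‖ :=
  (norm_mul_le _ _).trans (mul_le_of_le_one_right (norm_nonneg _) (norm_le p hp))

theorem norm_one_sub_mul_le_norm_sub (hp : IsStarProjection p) (q : A) :
    ‖(1 - p) * q‖ ≤ ‖p - q‖ := by
  have h : (1 - p) * q = (1 - p) * (q - p) := by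
    rw [mul_sub, hp.one_sub_mul_self, sub_zero]
  rw [h, norm_sub_rev]
  exact hp.one_sub.norm_mul_le_left _

theorem norm_one_sub_mul_self_le_norm_sub (hp : IsStarProjection p) (q : A) :
    ‖(1 - q) * p‖ ≤ ‖p - q‖ := by
  have h : (1 - q) * p = (p - q) * p := by
    rw [sub_mul, sub_mul, one_mul, hp.isIdempotentElem.eq]
  rw [h]
  exact hp.norm_mul_le_right _

end IsStarProjection

theorem norm_one_sub_mul_eq_norm_mul_one_sub_of_star_eq (hp : IsStarProjection p)
    (hq : star q = (2 * p - 1) * q * (2 * p - 1)) : ‖(1 - p) * q‖ = ‖q * (1 - p)‖ := by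
  have hu := hp.two_mul_sub_one_mem_unitary
  calc ‖(1 - p) * q‖ = ‖star q * (1 - p)‖ := by
        rw [← norm_star, star_mul, star_sub, star_one, hp.isSelfAdjoint.star_eq]
    _ = ‖(2 * p - 1) * (q * -(1 - p))‖ := by
        rw [hq, mul_assoc, mul_assoc, hp.isIdempotentElem.two_mul_sub_one_mul_one_sub]
    _ = ‖q * (1 - p)‖ := by rw [CStarRing.norm_mem_unitary_mul _ hu, mul_neg, norm_neg]

theorem norm_one_sub_mul_eq_norm_mul_one_sub_of_star_eq' (hp : IsStarProjection p)
    (hq : star q = (2 * p - 1) * q * (2 * p - 1)) : ‖(1 - q) * p‖ = ‖p * (1 - q)‖ := by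
  have hu := hp.two_mul_sub_one_mem_unitary
  have hq' : 1 - star q = (2 * p - 1) * (1 - q) * (2 * p - 1) := by
    have h : (2 * p - 1) * (1 - q) * (2 * p - 1)
        = (2 * p - 1) * (2 * p - 1) - (2 * p - 1) * q * (2 * p - 1) := by noncomm_ring
    rw [h, hp.isIdempotentElem.two_mul_sub_one_mul_self, hq]
  calc ‖(1 - q) * p‖ = ‖p * (1 - star q)‖ := by
        rw [← norm_star, star_mul, star_sub, star_one, hp.isSelfAdjoint.star_eq]
    _ = ‖p * (1 - q) * (2 * p - 1)‖ := by
        rw [hq', ← mul_assoc, ← mul_assoc, hp.isIdempotentElem.mul_two_mul_sub_one]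
    _ = ‖p * (1 - q)‖ := CStarRing.norm_mul_mem_unitary _ hu

end CStarRing

section InnerProductSpace

open ContinuousLinearMap

variable {𝕜 E : Type*} [RCLike 𝕜] [NormedAddCommGroup E] [InnerProductSpace 𝕜 E] [CompleteSpace E]
  {p : E →L[𝕜] E}

theorem IsStarProjection.norm_sq_eq_add_norm_sq (hp : IsStarProjection p) (x : E) :
    ‖x‖ ^ 2 = ‖p x‖ ^ 2 + ‖(1 - p) x‖ ^ 2 := by
  have horth : ⟪p x, (1 - p) x⟫_𝕜 = 0 := by
    rw [← adjoint_inner_right, hp.isSelfAdjoint.adjoint_eq, ← mul_apply_eq_comp p (1 - p) x,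
      hp.mul_one_sub_self, zero_apply, inner_zero_right]
  rw [sq, sq, sq, ← norm_add_sq_eq_norm_sq_add_norm_sq_of_inner_eq_zero _ _ horth]
  simp

theorem IsStarProjection.norm_le_max_of_commute (hp : IsStarProjection p) {X : E →L[𝕜] E}
    (hX : Commute p X) : ‖X‖ ≤ max ‖p * X‖ ‖(1 - p) * X‖ := by
  set m := max ‖p * X‖ ‖(1 - p) * X‖
  have hm : 0 ≤ m := (norm_nonneg _).trans (le_max_left _ _)
  refine opNorm_le_bound _ hm fun x => ?_
  have h₁ : p (X x) = (p * X) (p x) := by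
    simpa using DFunLike.congr_fun (hp.isIdempotentElem.mul_eq_mul_mul_self_of_commute hX) x
  have h₂ : (1 - p) (X x) = ((1 - p) * X) ((1 - p) x) := by
    simpa using DFunLike.congr_fun (hp.one_sub.isIdempotentElem.mul_eq_mul_mul_self_of_commute
      ((Commute.one_left X).sub_left hX)) x
  have hsq : ‖X x‖ ^ 2 ≤ (m * ‖x‖) ^ 2 :=
    calc ‖X x‖ ^ 2 = ‖p (X x)‖ ^ 2 + ‖(1 - p) (X x)‖ ^ 2 := hp.norm_sq_eq_add_norm_sq _
      _ ≤ (m * ‖p x‖) ^ 2 + (m * ‖(1 - p) x‖) ^ 2 := by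
        rw [h₁, h₂]
        gcongr
        · exact (le_opNorm _ _).trans (by gcongr; exact le_max_left _ _)
        · exact (le_opNorm _ _).trans (by gcongr; exact le_max_right _ _)
      _ = (m * ‖x‖) ^ 2 := by
        rw [mul_pow, mul_pow, ← mul_add, ← hp.norm_sq_eq_add_norm_sq, mul_pow]
  exact (pow_le_pow_iff_left₀ (norm_nonneg _) (by positivity) two_ne_zero).mp hsq

theorem norm_sub_mul_sub_le_max (hp : IsStarProjection p) {q : E →L[𝕜] E}
    (hq : IsIdempotentElem q) : ‖(p - q) * (p - q)‖ ≤ max ‖(1 - p) * q‖ ‖(1 - q) * p‖ := by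
  refine (hp.norm_le_max_of_commute
    (hp.isIdempotentElem.commute_sub_mul_sub hq)).trans (max_le ?_ ?_)
  · rw [hp.isIdempotentElem.mul_sub_mul_sub hq]
    exact (hp.norm_mul_le_left _).trans (le_max_right _ _)
  · rw [hp.isIdempotentElem.one_sub_mul_sub_mul_sub hq]
    exact (hp.one_sub.norm_mul_le_right _).trans (le_max_left _ _)

end InnerProductSpace

/-- For a quasi-projection pair `(P, Q)`: `‖(1-P)Q‖ = ‖Q(1-P)‖`, `‖(1-Q)P‖ = ‖P(1-Q)‖`,
and `‖(P-Q)²‖ ≤ max {‖(1-P)Q‖, ‖(1-Q)P‖} ≤ ‖P-Q‖`. -/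
theorem quasiProjectionPair_norm_ineq (P Q : H →L[ℂ] H)
    (hPsa : IsSelfAdjoint P) (hPidem : IsIdempotentElem P) (hQidem : IsIdempotentElem Q)
    (hqpp : star Q = (2 * P - 1) * Q * (2 * P - 1)) :
    ‖(1 - P) * Q‖ = ‖Q * (1 - P)‖ ∧ ‖(1 - Q) * P‖ = ‖P * (1 - Q)‖ ∧
    ‖(P - Q) * (P - Q)‖ ≤ max ‖(1 - P) * Q‖ ‖(1 - Q) * P‖ ∧
    max ‖(1 - P) * Q‖ ‖(1 - Q) * P‖ ≤ ‖P - Q‖ := by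
  have hP : IsStarProjection P := ⟨hPidem, hPsa⟩
  exact ⟨norm_one_sub_mul_eq_norm_mul_one_sub_of_star_eq hP hqpp,
    norm_one_sub_mul_eq_norm_mul_one_sub_of_star_eq' hP hqpp,
    norm_sub_mul_sub_le_max hP hQidem,
    max_le (hP.norm_one_sub_mul_le_norm_sub Q) (hP.norm_one_sub_mul_self_le_norm_sub Q)⟩

end
end
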